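/- Let Λ be the Dirichlet-to-Neumann map of the lattice Kirchhoff matrix K with positive conductivities γ1,…,γ12. Then γ2 · |det(Λ({1,2,7},{8,5,6}))| = γ7 · γ10 · |det(Λ({1,2},{5,6}))|; equivalently, the ratio |det(Λ({1,2,7},{8,5,6}))| / |det(Λ({1,2},{5,6}))| equals γ7·γ10/γ2. -/

import Mathlib

open Matrix

/-- The endpoints of the 12 edges of the lattice network (0-based: vertex `v` of the
paper is `v - 1`, edge conductivity `γₖ` of the paper is `γ (k-1)`).  The edges are
{1,9}γ₁, {9,12}γ₂, {6,12}γ₃, {2,10}γ₄, {10,11}γ₅, {5,11}γ₆, {8,9}γ₇, {9,10}γ₈,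
{3,10}γ₉, {7,12}γ₁₀, {11,12}γ₁₁, {4,11}γ₁₂. -/
def edgeEnds : Fin 12 → Fin 12 × Fin 12 :=
  ![(0, 8), (8, 11), (5, 11), (1, 9), (9, 10), (4, 10),
    (7, 8), (8, 9), (2, 9), (6, 11), (10, 11), (3, 10)]

/-- The conductivity between vertices `i` and `j`: `γ e` if some edge `e` joins `i`
and `j`, and `0` otherwise. -/
def condWt (γ : Fin 12 → ℝ) (i j : Fin 12) : ℝ :=
  ∑ e : Fin 12, if edgeEnds e = (i, j) ∨ edgeEnds e = (j, i) then γ e else 0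

/-- The Kirchhoff matrix of the lattice network: `K i j = -γᵢⱼ` off the diagonal and
`K i i = ∑ⱼ γᵢⱼ` on the diagonal. -/
def kirchhoff (γ : Fin 12 → ℝ) : Matrix (Fin 12) (Fin 12) ℝ :=
  Matrix.of fun i j => if i = j then ∑ k : Fin 12, condWt γ i k else -condWt γ i j

/-- The boundary vertices (paper's vertices 1–8) as indices of `Fin 12`. -/
def bdV : Fin 8 → Fin 12 := Fin.castLE (by norm_num)

/-- The interior vertices (paper's vertices 9–12) as indices of `Fin 12`. -/
def intV : Fin 4 → Fin 12 := fun i => i.addNat 8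

/-- The boundary-boundary block `A` of the Kirchhoff matrix. -/
def blockA (γ : Fin 12 → ℝ) : Matrix (Fin 8) (Fin 8) ℝ := (kirchhoff γ).submatrix bdV bdV

/-- The boundary-interior block `B` of the Kirchhoff matrix. -/
def blockB (γ : Fin 12 → ℝ) : Matrix (Fin 8) (Fin 4) ℝ := (kirchhoff γ).submatrix bdV intV

/-- The interior-interior block `C` of the Kirchhoff matrix. -/
def blockC (γ : Fin 12 → ℝ) : Matrix (Fin 4) (Fin 4) ℝ := (kirchhoff γ).submatrix intV intV

/-- The Dirichlet-to-Neumann map `Λ = A - B C⁻¹ Bᵀ` of the lattice network. -/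
noncomputable def dtn (γ : Fin 12 → ℝ) : Matrix (Fin 8) (Fin 8) ℝ :=
  blockA γ - blockB γ * (blockC γ)⁻¹ * (blockB γ)ᵀ

/-!
Every boundary vertex is a leaf, attached to a single interior vertex by a single edge, and no
two boundary vertices are adjacent. Hence `A` is diagonal and each row of `B` has one nonzero
entry, so a minor of `Λ = A - B C⁻¹ Bᵀ` with disjoint row and column sets is, up to sign, the
product of the conductivities of the boundary edges involved times a minor of `C⁻¹`. By
Jacobi's complementary minor identity a minor of `C⁻¹` is the complementary minor of `C`
divided by `det C`: for the 3 × 3 minor this is the entry `C(10, 11) = -γ₅`, for the 2 × 2 minor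
it is `det !![0, -γ₂; -γ₅, 0]`. So
`|det Λ({1,2,7},{8,5,6})| = γ₁γ₄γ₁₀ · γ₇γ₆γ₃ · γ₅ / |det C|` and
`|det Λ({1,2},{5,6})| = γ₁γ₄ · γ₆γ₃ · γ₂γ₅ / |det C|`,
where `det C ≠ 0` because `C` is strictly diagonally dominant.
-/

namespace Matrix

section Field

variable {K : Type*} [Field K]

theorem adjugate_nonsing_inv {n : Type*} [Fintype n] [DecidableEq n]
    (A : Matrix n n K) (hA : A.det ≠ 0) : adjugate A⁻¹ = A.det⁻¹ • A :=
  calc adjugate A⁻¹ = adjugate A⁻¹ * (A⁻¹ * A) := by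
        rw [nonsing_inv_mul _ (isUnit_iff_ne_zero.mpr hA), Matrix.mul_one]
    _ = A.det⁻¹ • A := by
        rw [← Matrix.mul_assoc, adjugate_mul, smul_one_mul, det_nonsing_inv, Ring.inverse_eq_inv']

/-- Jacobi's identity for maximal minors: they are the cofactors of `A⁻¹`, i.e. entries of
`adjugate A⁻¹ = A / det A`. -/
theorem det_inv_submatrix_succAbove {n : ℕ} (A : Matrix (Fin (n + 1)) (Fin (n + 1)) K)
    (hA : A.det ≠ 0) (i j : Fin (n + 1)) :
    (A⁻¹.submatrix i.succAbove j.succAbove).det = (-1) ^ (i + j : ℕ) * A j i / A.det := by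
  have h := adjugate_fin_succ_eq_det_submatrix A⁻¹ j i
  rw [adjugate_nonsing_inv A hA, smul_apply, smul_eq_mul] at h
  calc (A⁻¹.submatrix i.succAbove j.succAbove).det
      = (-1) ^ (i + j : ℕ) * ((-1) ^ (i + j : ℕ) * (A⁻¹.submatrix i.succAbove j.succAbove).det) := by
        rw [← mul_assoc, ← mul_pow]; norm_num
    _ = (-1) ^ (i + j : ℕ) * A j i / A.det := by rw [← h]; ring

/-- Jacobi's complementary minor identity for the upper right 2 × 2 block of a 4 × 4 matrix,
as a polynomial identity. -/
theorem det_adjugate_submatrix_fin_four (A : Matrix (Fin 4) (Fin 4) K) :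
    ((adjugate A).submatrix ![0, 1] ![2, 3]).det = A.det * (A.submatrix ![0, 1] ![2, 3]).det := by
  simp only [det_fin_two, submatrix_apply, adjugate_fin_succ_eq_det_submatrix, det_fin_three,
    det_succ_row_zero (n := 3), Fin.sum_univ_four]
  simp [Fin.succAbove]
  ring

theorem det_inv_submatrix_fin_four (A : Matrix (Fin 4) (Fin 4) K) (hA : A.det ≠ 0) :
    (A⁻¹.submatrix ![0, 1] ![2, 3]).det = (A.submatrix ![0, 1] ![2, 3]).det / A.det := by
  rw [inv_def, Ring.inverse_eq_inv']
  change (A.det⁻¹ • (adjugate A).submatrix ![0, 1] ![2, 3]).det = _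
  rw [det_smul, det_adjugate_submatrix_fin_four, Fintype.card_fin, inv_pow]
  field_simp

end Field

theorem mul_mul_transpose_of_apply_eq_ite {n m R : Type*} [Fintype n] [Fintype m]
    [DecidableEq n] [DecidableEq m] [CommRing R]
    (B : Matrix n m R) (X : Matrix m m R) (c : n → R) (ν : n → m)
    (hB : ∀ p j, B p j = if j = ν p then -c p else 0) :
    B * X * Bᵀ = diagonal c * X.submatrix ν ν * diagonal c := by
  ext p q
  simp [mul_apply, hB, diagonal]

end Matrix

def boundaryNeighbor : Fin 8 → Fin 4 := ![0, 1, 1, 2, 2, 3, 3, 0]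

def boundaryEdge : Fin 8 → Fin 12 := ![0, 3, 8, 11, 5, 2, 9, 6]

theorem edgeEnds_eq_boundary_iff (p : Fin 8) (v e : Fin 12) :
    (edgeEnds e = (bdV p, v) ∨ edgeEnds e = (v, bdV p)) ↔
      e = boundaryEdge p ∧ v = intV (boundaryNeighbor p) := by
  revert p v e; decide

theorem edgeEnds_fst_ne_snd (e : Fin 12) : (edgeEnds e).1 ≠ (edgeEnds e).2 := by
  revert e; decide

theorem intV_injective : Function.Injective intV := fun a b h => by
  simpa [intV, Fin.ext_iff] using h

theorem bdV_ne_intV (p : Fin 8) (j : Fin 4) : bdV p ≠ intV j := by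
  simp [bdV, intV, Fin.ext_iff]; omega

theorem condWt_bdV (γ : Fin 12 → ℝ) (p : Fin 8) (v : Fin 12) :
    condWt γ (bdV p) v = if v = intV (boundaryNeighbor p) then γ (boundaryEdge p) else 0 := by
  simp only [condWt, edgeEnds_eq_boundary_iff, ite_and]
  simp

theorem kirchhoff_apply_of_ne (γ : Fin 12 → ℝ) {i j : Fin 12} (h : i ≠ j) :
    kirchhoff γ i j = -condWt γ i j := by
  simp [kirchhoff, h]

theorem kirchhoff_apply_self (γ : Fin 12 → ℝ) (i : Fin 12) :
    kirchhoff γ i i = ∑ e, if (edgeEnds e).1 = i ∨ (edgeEnds e).2 = i then γ e else 0 := by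
  simp only [kirchhoff, of_apply, if_true, condWt]
  rw [Finset.sum_comm]
  refine Finset.sum_congr rfl fun e _ => ?_
  have hab := edgeEnds_fst_ne_snd e
  obtain ⟨a, b⟩ := edgeEnds e
  by_cases ha : a = i <;> by_cases hb : b = i <;> simp_all [Prod.ext_iff]

theorem blockA_apply_of_ne (γ : Fin 12 → ℝ) {p q : Fin 8} (h : p ≠ q) : blockA γ p q = 0 := by
  have hpq : bdV p ≠ bdV q := (Fin.castLE_injective _).ne h
  rw [blockA, submatrix_apply, kirchhoff_apply_of_ne γ hpq, condWt_bdV, if_neg (bdV_ne_intV q _),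
    neg_zero]

theorem blockB_apply (γ : Fin 12 → ℝ) (p : Fin 8) (j : Fin 4) :
    blockB γ p j = if j = boundaryNeighbor p then -γ (boundaryEdge p) else 0 := by
  rw [blockB, submatrix_apply, kirchhoff_apply_of_ne γ (bdV_ne_intV p j), condWt_bdV]
  simp only [intV_injective.eq_iff]
  split_ifs <;> simp

theorem blockC_eq (γ : Fin 12 → ℝ) :
    blockC γ = !![γ 0 + γ 1 + γ 6 + γ 7, -γ 7, 0, -γ 1;
      -γ 7, γ 3 + γ 4 + γ 7 + γ 8, -γ 4, 0;
      0, -γ 4, γ 4 + γ 5 + γ 10 + γ 11, -γ 10;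
      -γ 1, 0, -γ 10, γ 1 + γ 2 + γ 9 + γ 10] := by
  ext a b
  fin_cases a <;> fin_cases b <;> simp only [blockC, submatrix_apply, intV, Fin.reduceAddNat,
    Fin.mk_zero, Fin.mk_one, Fin.isValue, Fin.reduceFinMk]
  all_goals first
    | rw [kirchhoff_apply_self]; simp [Fin.sum_univ_succ, edgeEnds]; ring
    | rw [kirchhoff_apply_of_ne _ (by decide)]; simp [condWt, Fin.sum_univ_succ, edgeEnds]

theorem det_blockC_ne_zero (γ : Fin 12 → ℝ) (hγ : ∀ e, 0 < γ e) : (blockC γ).det ≠ 0 := by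
  have hdiag : ∀ a b c d, 0 < γ a + γ b + γ c + γ d := fun a b c d => by
    linarith [hγ a, hγ b, hγ c, hγ d]
  refine det_ne_zero_of_sum_row_lt_diag fun k => ?_
  rw [Finset.sum_erase_eq_sub (Finset.mem_univ k), Fin.sum_univ_four, blockC_eq]
  fin_cases k <;> simp [abs_of_pos, hγ, hdiag] <;>
    linarith [hγ 0, hγ 2, hγ 3, hγ 5, hγ 6, hγ 8, hγ 9, hγ 11]

theorem dtn_submatrix_of_disjoint (γ : Fin 12 → ℝ) {k : ℕ} (r s : Fin k → Fin 8)
    (hrs : ∀ i j, r i ≠ s j) :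
    (dtn γ).submatrix r s =
      -(diagonal (fun i => γ (boundaryEdge (r i))) *
        (blockC γ)⁻¹.submatrix (boundaryNeighbor ∘ r) (boundaryNeighbor ∘ s) *
        diagonal (fun j => γ (boundaryEdge (s j)))) := by
  rw [dtn, mul_mul_transpose_of_apply_eq_ite _ _ _ _ (blockB_apply γ)]
  ext i j
  simp [blockA_apply_of_ne γ (hrs i j)]

theorem det_dtn_submatrix_of_disjoint (γ : Fin 12 → ℝ) {k : ℕ} (r s : Fin k → Fin 8)
    (hrs : ∀ i j, r i ≠ s j) :
    ((dtn γ).submatrix r s).det =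
      (-1) ^ k * (∏ i, γ (boundaryEdge (r i))) * (∏ j, γ (boundaryEdge (s j))) *
        ((blockC γ)⁻¹.submatrix (boundaryNeighbor ∘ r) (boundaryNeighbor ∘ s)).det := by
  rw [dtn_submatrix_of_disjoint γ r s hrs, det_neg, det_mul, det_mul, det_diagonal, det_diagonal,
    Fintype.card_fin]
  ring

theorem abs_det_dtn_submatrix_three (γ : Fin 12 → ℝ) (hγ : ∀ e, 0 < γ e) :
    |((dtn γ).submatrix ![0, 1, 6] ![7, 4, 5]).det| =
      γ 0 * γ 3 * γ 9 * (γ 6 * γ 5 * γ 2) * γ 4 / |(blockC γ).det| := by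
  have hrows : boundaryNeighbor ∘ ![0, 1, 6] = (2 : Fin 4).succAbove := by
    funext i; fin_cases i <;> rfl
  have hcols : boundaryNeighbor ∘ ![7, 4, 5] = (1 : Fin 4).succAbove := by
    funext i; fin_cases i <;> rfl
  have hentry : blockC γ 1 2 = -γ 4 := by simp [blockC_eq]
  rw [det_dtn_submatrix_of_disjoint γ _ _ (by decide), hrows, hcols,
    det_inv_submatrix_succAbove _ (det_blockC_ne_zero γ hγ), hentry]
  simp [Fin.prod_univ_three, boundaryEdge, abs_mul, abs_div, abs_of_pos, hγ, mul_div_assoc]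

theorem abs_det_dtn_submatrix_two (γ : Fin 12 → ℝ) (hγ : ∀ e, 0 < γ e) :
    |((dtn γ).submatrix ![0, 1] ![4, 5]).det| =
      γ 0 * γ 3 * (γ 5 * γ 2) * (γ 1 * γ 4) / |(blockC γ).det| := by
  have hrows : boundaryNeighbor ∘ ![0, 1] = ![0, 1] := by
    funext i; fin_cases i <;> rfl
  have hcols : boundaryNeighbor ∘ ![4, 5] = ![2, 3] := by
    funext i; fin_cases i <;> rfl
  have hminor : (blockC γ).submatrix ![0, 1] ![2, 3] = !![0, -γ 1; -γ 4, 0] := by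
    rw [blockC_eq]; ext i j; fin_cases i <;> fin_cases j <;> rfl
  rw [det_dtn_submatrix_of_disjoint γ _ _ (by decide), hrows, hcols,
    det_inv_submatrix_fin_four _ (det_blockC_ne_zero γ hγ), hminor]
  simp [Fin.prod_univ_two, boundaryEdge, abs_mul, abs_div, abs_of_pos, hγ, mul_div_assoc]

/-- `γ₂ · |det Λ({1,2,7},{8,5,6})| = γ₇ γ₁₀ · |det Λ({1,2},{5,6})|`;
equivalently the ratio of the two absolute subdeterminants is `γ₇γ₁₀/γ₂`
(0-based: `γ 1`, `γ 6`, `γ 9`). -/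
theorem gamma_ratio_127_856 (γ : Fin 12 → ℝ) (hγ : ∀ e, 0 < γ e) :
    γ 1 * |((dtn γ).submatrix ![0, 1, 6] ![7, 4, 5]).det| =
        γ 6 * γ 9 * |((dtn γ).submatrix ![0, 1] ![4, 5]).det| ∧
    |((dtn γ).submatrix ![0, 1, 6] ![7, 4, 5]).det| /
        |((dtn γ).submatrix ![0, 1] ![4, 5]).det| = γ 6 * γ 9 / γ 1 := by
  have hC : |(blockC γ).det| ≠ 0 := abs_ne_zero.mpr (det_blockC_ne_zero γ hγ)
  have hγ' : ∀ e, γ e ≠ 0 := fun e => (hγ e).ne'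
  rw [abs_det_dtn_submatrix_three γ hγ, abs_det_dtn_submatrix_two γ hγ]
  constructor
  · field_simp
  · field_simp [hγ']
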